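/- arXiv:1712.07211 — 2 statements merged into one kernel-verified Lean document; each statement's English description precedes it below -/
import Mathlib

section
/- For positive integers n, d with 1 ≤ d < n/2 and x = d/n, the partial sum of binomial coefficients ∑_{i=0}^{d-2} C(n,i) is strictly less than (x²/((1-2x)(1-x)))·C(n,d). -/
/-!
Each step down from `C(n, i + 1)` to `C(n, i)` for `i < d` multiplies by `(i + 1) / (n - i) ≤ r`,
where `r = d / (n - d) < 1`. Hence `C(n, i) ≤ r ^ (d - i) C(n, d)`, and the sum over `i ≤ d - 2` is
at most `C(n, d)` times the tail `r² + r³ + ⋯ < r² / (1 - r) = x² / ((1 - 2x)(1 - x))`.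
-/

open Finset

namespace Nat

theorem choose_mul_sub_le_mul_choose_succ {n d i : ℕ} (h : i < d) :
    n.choose i * (n - d) ≤ d * n.choose (i + 1) :=
  calc n.choose i * (n - d) ≤ n.choose i * (n - i) := by gcongr
    _ = n.choose (i + 1) * (i + 1) := (choose_succ_right_eq n i).symm
    _ ≤ n.choose (i + 1) * d := Nat.mul_le_mul_left _ h
    _ = d * n.choose (i + 1) := mul_comm _ _

theorem choose_mul_pow_sub_le {n d i : ℕ} (h : i ≤ d) :
    n.choose i * (n - d) ^ (d - i) ≤ d ^ (d - i) * n.choose d := by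
  induction h using Nat.decreasingInduction with
  | self => simp
  | of_succ i hi ih =>
    rw [show d - i = d - (i + 1) + 1 by omega, pow_succ, pow_succ]
    calc n.choose i * ((n - d) ^ (d - (i + 1)) * (n - d))
        = n.choose i * (n - d) * (n - d) ^ (d - (i + 1)) := by ring
      _ ≤ d * n.choose (i + 1) * (n - d) ^ (d - (i + 1)) :=
        Nat.mul_le_mul_right _ (choose_mul_sub_le_mul_choose_succ hi)
      _ = d * (n.choose (i + 1) * (n - d) ^ (d - (i + 1))) := by ring
      _ ≤ d * (d ^ (d - (i + 1)) * n.choose d) := by gcongr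
      _ = d ^ (d - (i + 1)) * d * n.choose d := by ring

theorem choose_le_choose_mul_pow {n d i : ℕ} (hdn : d < n) (h : i ≤ d) :
    (n.choose i : ℝ) ≤ n.choose d * ((d : ℝ) / (n - d)) ^ (d - i) := by
  have hnd : (0 : ℝ) < n - d := by
    rw [sub_pos]; exact_mod_cast hdn
  rw [div_pow, mul_div_assoc', le_div_iff₀ (pow_pos hnd _), mul_comm (n.choose d : ℝ)]
  rw [← Nat.cast_sub hdn.le]
  exact_mod_cast Nat.choose_mul_pow_sub_le h

end Nat

theorem sum_range_pow_sub_lt {r : ℝ} (h0 : 0 < r) (h1 : r < 1) {d : ℕ} (hd : 1 ≤ d) :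
    ∑ i ∈ range (d - 1), r ^ (d - i) < r ^ 2 / (1 - r) := by
  have hreflect : ∑ i ∈ range (d - 1), r ^ (d - i) = r ^ 2 * ∑ j ∈ range (d - 1), r ^ j := by
    rw [← sum_range_reflect, mul_sum]
    refine sum_congr rfl fun j hj => ?_
    rw [mem_range] at hj
    rw [← pow_add, show d - (d - 1 - 1 - j) = 2 + j by omega]
  have hpow : 0 < r ^ 2 * r ^ (d - 1) := by positivity
  rw [lt_div_iff₀ (sub_pos.2 h1), hreflect, mul_assoc, geom_sum_mul_neg]
  linarith

theorem sq_div_one_sub_div_sub_eq {n d : ℝ} (hd : 0 ≤ d) (hdn : 2 * d < n) :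
    (d / (n - d)) ^ 2 / (1 - d / (n - d)) = (d / n) ^ 2 / ((1 - 2 * (d / n)) * (1 - d / n)) := by
  have hn : n ≠ 0 := by linarith
  have hnd : n - d ≠ 0 := by linarith
  have hn2d : n - 2 * d ≠ 0 := by linarith
  field_simp
  ring

/-- row-count bound for the Boolean Macaulay matrix. -/
theorem macaulay_row_bound (n d : ℕ) (hd : 1 ≤ d) (hdn : 2 * d < n)
    (x : ℝ) (hx : x = (d : ℝ) / n) :
    (∑ i ∈ Finset.range (d - 1), (n.choose i : ℝ)) <
      (x ^ 2 / ((1 - 2 * x) * (1 - x))) * (n.choose d : ℝ) := by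
  have hd' : (0 : ℝ) < d := by exact_mod_cast hd
  have hdn' : 2 * (d : ℝ) < n := by exact_mod_cast hdn
  set r : ℝ := d / (n - d) with hr
  have hr0 : 0 < r := div_pos hd' (by linarith)
  have hr1 : r < 1 := (div_lt_one (by linarith)).mpr (by linarith)
  have hC : (0 : ℝ) < n.choose d := by exact_mod_cast Nat.choose_pos (by omega)
  calc ∑ i ∈ range (d - 1), (n.choose i : ℝ)
      ≤ ∑ i ∈ range (d - 1), n.choose d * r ^ (d - i) :=
        sum_le_sum fun i hi => Nat.choose_le_choose_mul_pow (by omega) (by rw [mem_range] at hi; omega)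
    _ = n.choose d * ∑ i ∈ range (d - 1), r ^ (d - i) := (mul_sum ..).symm
    _ < n.choose d * (r ^ 2 / (1 - r)) := by gcongr; exact sum_range_pow_sub_lt hr0 hr1 hd
    _ = (x ^ 2 / ((1 - 2 * x) * (1 - x))) * n.choose d := by
        rw [hr, sq_div_one_sub_div_sub_eq hd'.le hdn', hx, mul_comm]
end

section
/- Let G : F₂ⁿ → F₂ have exactly M ≥ 1 preimages of 1. Starting from the uniform superposition over F₂ⁿ, after t iterations of the Grover operator the amplitude on the good subspace is sin((2t+1)θ) where sin²θ = M/2ⁿ; consequently, taking t = ⌊(π/4)·√(2ⁿ/M)⌋ iterations, the probability of measuring an element of G⁻¹(1) is at least 1 - M/2ⁿ. -/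
open Real

/-!
The Grover iteration rotates the point `(sin α, cos α)` to `(sin (α + 2θ), cos (α + 2θ))`, so
starting from angle `θ` the good amplitude after `t` steps is `sin ((2t + 1)θ)`. The choice
`t = ⌊π / (4θ)⌋` puts the angle `(2t + 1)θ` within `θ` of `π / 2`; hence the bad amplitude
`cos ((2t + 1)θ)` is at most `sin θ = √(M / N)` in absolute value, and the success probability is
at least `1 - M / N`.
-/

theorem iterate_rotation_sin_cos {φ : ℝ} {R : ℝ × ℝ → ℝ × ℝ}
    (hR : ∀ p : ℝ × ℝ, R p = (p.1 * cos φ + p.2 * sin φ, -p.1 * sin φ + p.2 * cos φ))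
    (α : ℝ) (t : ℕ) : R^[t] (sin α, cos α) = (sin (α + t * φ), cos (α + t * φ)) := by
  induction t with
  | zero => simp
  | succ t ih =>
    rw [Function.iterate_succ_apply', ih, hR, Nat.cast_succ, add_one_mul, ← add_assoc,
      sin_add _ φ, cos_add _ φ, Prod.mk.injEq]
    constructor <;> ring

theorem sin_sq_arcsin_sqrt {x : ℝ} (hx₀ : 0 ≤ x) (hx₁ : x ≤ 1) : sin (arcsin √x) ^ 2 = x := by
  have hsqrt : √x ≤ 1 := sqrt_le_one.mpr hx₁
  rw [sin_arcsin (by linarith [sqrt_nonneg x]) hsqrt, sq_sqrt hx₀]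

theorem cos_sq_le_sin_sq_of_abs_sub_pi_div_two_le {α θ : ℝ} (hθ : θ ≤ π / 2)
    (hα : |α - π / 2| ≤ θ) : cos α ^ 2 ≤ sin θ ^ 2 := by
  obtain ⟨hlo, hhi⟩ := abs_le.mp hα
  have hθ_mem : θ ∈ Set.Icc (-(π / 2)) (π / 2) := ⟨by linarith, hθ⟩
  have hnegθ_mem : -θ ∈ Set.Icc (-(π / 2)) (π / 2) := ⟨by linarith, by linarith⟩
  have hβ_mem : π / 2 - α ∈ Set.Icc (-(π / 2)) (π / 2) := ⟨by linarith, by linarith⟩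
  have hupper : sin (π / 2 - α) ≤ sin θ :=
    (strictMonoOn_sin.le_iff_le hβ_mem hθ_mem).mpr (by linarith)
  have hlower : sin (-θ) ≤ sin (π / 2 - α) :=
    (strictMonoOn_sin.le_iff_le hnegθ_mem hβ_mem).mpr (by linarith)
  rw [← sin_pi_div_two_sub]
  exact sq_le_sq' (by rwa [sin_neg] at hlower) hupper

theorem abs_odd_floor_mul_sub_pi_div_two_le {θ : ℝ} (hθ : 0 < θ) :
    |(2 * (⌊π / (4 * θ)⌋₊ : ℝ) + 1) * θ - π / 2| ≤ θ := by
  set t : ℕ := ⌊π / (4 * θ)⌋₊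
  have h4θ : 0 < 4 * θ := by positivity
  have hle : (t : ℝ) * (4 * θ) ≤ π :=
    (le_div_iff₀ h4θ).mp (Nat.floor_le (by positivity))
  have hlt : π < ((t : ℝ) + 1) * (4 * θ) := (div_lt_iff₀ h4θ).mp (Nat.lt_floor_add_one _)
  rw [abs_le]
  constructor <;> linarith

/-- Grover's algorithm, as a fact about the two-dimensional rotation it
induces on the span of the good and bad states.  With `N = 2ⁿ`, `θ = arcsin √(M/N)`,
the Grover operator acts as rotation by `2θ`; starting from the uniform superposition
`(sin θ, cos θ)` (good amplitude, bad amplitude), after `t` iterations the good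
amplitude is `sin((2t+1)θ)`, and for `t = ⌊π/(4θ)⌋` the success probability
`sin²((2t+1)θ)` is at least `1 - M/N`. -/
theorem grover_success_probability (n M : ℕ) (hM : 1 ≤ M) (hMN : M ≤ 2 ^ n)
    (θ : ℝ) (hθ : θ = Real.arcsin (Real.sqrt ((M : ℝ) / 2 ^ n)))
    (R : ℝ × ℝ → ℝ × ℝ)
    (hR : ∀ p : ℝ × ℝ, R p = (p.1 * Real.cos (2 * θ) + p.2 * Real.sin (2 * θ),
                              -p.1 * Real.sin (2 * θ) + p.2 * Real.cos (2 * θ))) :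
    (∀ t : ℕ, R^[t] (Real.sin θ, Real.cos θ) =
        (Real.sin ((2 * t + 1) * θ), Real.cos ((2 * t + 1) * θ))) ∧
    (Real.sin ((2 * (⌊π / (4 * θ)⌋₊ : ℝ) + 1) * θ)) ^ 2 ≥ 1 - (M : ℝ) / 2 ^ n := by
  have hratio_pos : 0 < (M : ℝ) / 2 ^ n := by
    have : (0 : ℝ) < M := by exact_mod_cast hM
    positivity
  have hratio_le_one : (M : ℝ) / 2 ^ n ≤ 1 := by
    rw [div_le_one (by positivity)]
    exact_mod_cast hMN
  have hθ_pos : 0 < θ := hθ ▸ arcsin_pos.mpr (sqrt_pos.mpr hratio_pos)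
  have hθ_le : θ ≤ π / 2 := hθ ▸ arcsin_le_pi_div_two _
  have hsin_sq : sin θ ^ 2 = (M : ℝ) / 2 ^ n := hθ ▸ sin_sq_arcsin_sqrt hratio_pos.le hratio_le_one
  refine ⟨fun t => ?_, ?_⟩
  · rw [iterate_rotation_sin_cos hR]
    congr 2 <;> ring
  · have hcos_sq := cos_sq_le_sin_sq_of_abs_sub_pi_div_two_le hθ_le
      (abs_odd_floor_mul_sub_pi_div_two_le hθ_pos)
    linarith [sin_sq_add_cos_sq ((2 * (⌊π / (4 * θ)⌋₊ : ℝ) + 1) * θ)]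
end
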